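/- arXiv:1705.04420 — 3 statements merged into one kernel-verified Lean document; each statement's English description precedes it below -/
import Mathlib

section
/- Let t₀ < 0, let C₀ > 0, r > 0, B ≥ 0 and M₀ ≥ 0 be constants, and let f : [t₀, 0) → [0,∞) be integrable; set C₁ = (C₀/r) ∫_{t₀}^0 f(τ) dτ. Let E_k : [t₀,0) → [0, M₀], k = 0, 1, 2, …, be measurable functions satisfying, for every k ≥ 0 and every t ∈ [t₀, 0), the inequality E_k(t) ≤ B + (C₀/r) ∫_{t₀}^t f(τ) ( Σ_{j=1}^∞ 2^{−j} E_j(τ) ) dτ. Then for every M ≥ 1 and every t ∈ [t₀,0), E₀(t) ≤ B e^{C₁} + (C₁^M / M!) M₀; consequently E₀(t) ≤ B e^{C₁} for all t ∈ [t₀,0). -/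
/-!
Write `G t = (C₀ / r) ∫_{t₀}^t f`. Since the weights `2^{-j}` sum to `1`, a bound
`E j τ ≤ P (G τ)` valid for every `j` is turned by the integral inequality into
`E k t ≤ B + ∫_{t₀}^t G' · P (G) = B + ∫_0^{G t} P`. Starting from `P ≡ M₀`, `M` such steps give
`picardBound`: `B ∑_{i<M} y^i / i! + y^M / M! · M₀` at `y = G t ≤ C₁`, and letting `M → ∞`
removes the `M₀` term. As `f` is only integrable, `G` is merely absolutely continuous, so the
substitution goes through the fundamental theorem of calculus for absolutely continuous functions.
-/

open MeasureTheory Set Filter Topology Finset Nat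

theorem LipschitzOnWith.comp_absolutelyContinuousOnInterval {Φ F : ℝ → ℝ} {K : NNReal}
    {s : Set ℝ} {a b : ℝ} (hΦ : LipschitzOnWith K Φ s) (hF : AbsolutelyContinuousOnInterval F a b)
    (hFs : MapsTo F (uIcc a b) s) : AbsolutelyContinuousOnInterval (Φ ∘ F) a b := by
  have hKF := Tendsto.const_mul (K : ℝ) hF
  rw [mul_zero] at hKF
  refine squeeze_zero' (Eventually.of_forall fun _ => sum_nonneg fun _ _ => dist_nonneg) ?_ hKF
  filter_upwards [mem_inf_of_right (mem_principal_self _)] with E hE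
  rw [mul_sum]
  refine sum_le_sum fun i hi => ?_
  exact hΦ.dist_le_mul _ (hFs (hE.1 i hi).1) _ (hFs (hE.1 i hi).2)

theorem ContDiff.comp_absolutelyContinuousOnInterval {Φ F : ℝ → ℝ} {a b : ℝ}
    (hΦ : ContDiff ℝ 1 Φ) (hF : AbsolutelyContinuousOnInterval F a b) :
    AbsolutelyContinuousOnInterval (Φ ∘ F) a b := by
  obtain ⟨R, hR⟩ := hF.exists_bound
  obtain ⟨K, hK⟩ := hΦ.contDiffOn.exists_lipschitzOnWith one_ne_zero
    (convex_closedBall (0 : ℝ) R) (isCompact_closedBall 0 R)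
  exact hK.comp_absolutelyContinuousOnInterval hF fun x hx => mem_closedBall_zero_iff.2 (hR x hx)

theorem IntervalIntegrable.integral_mul_comp_primitive {g Φ Φ' : ℝ → ℝ} {a b : ℝ}
    (hg : IntervalIntegrable g volume a b) (hΦ : ∀ y, HasDerivAt Φ (Φ' y) y)
    (hΦ' : Continuous Φ') :
    ∫ x in a..b, g x * Φ' (∫ t in a..x, g t) = Φ (∫ t in a..b, g t) - Φ 0 := by
  have hΦC : ContDiff ℝ 1 Φ := by
    rw [contDiff_one_iff_deriv, show deriv Φ = Φ' from funext fun y => (hΦ y).deriv]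
    exact ⟨fun y => (hΦ y).differentiableAt, hΦ'⟩
  have hF := hg.absolutelyContinuousOnInterval_intervalIntegral left_mem_uIcc
  have := (hΦC.comp_absolutelyContinuousOnInterval hF).integral_deriv_eq_sub
  rw [Function.comp_apply, Function.comp_apply, intervalIntegral.integral_same] at this
  rw [← this]
  refine intervalIntegral.integral_congr_ae ?_
  filter_upwards [hg.ae_hasDerivAt_integral] with x hx hxI
  rw [mul_comm]
  exact (((hΦ _).comp x (hx (uIoc_subset_uIcc hxI) a left_mem_uIcc)).deriv).symm

theorem hasDerivAt_pow_succ_div_factorial (n : ℕ) (y : ℝ) :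
    HasDerivAt (fun y : ℝ => y ^ (n + 1) / (n + 1)!) (y ^ n / n !) y := by
  refine ((hasDerivAt_pow (n + 1) y).div_const _).congr_deriv ?_
  push_cast [factorial_succ, add_tsub_cancel_right]
  field_simp

theorem hasDerivAt_sum_range_succ_pow_div_factorial (M : ℕ) (y : ℝ) :
    HasDerivAt (fun y : ℝ => ∑ i ∈ range (M + 1), y ^ i / i !)
      (∑ i ∈ range M, y ^ i / i !) y := by
  induction M with
  | zero => simpa using hasDerivAt_const y (1 : ℝ)
  | succ M ih =>
    simpa only [← sum_range_succ] using ih.fun_add (hasDerivAt_pow_succ_div_factorial M y)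

noncomputable def picardBound (B M₀ : ℝ) (M : ℕ) (y : ℝ) : ℝ :=
  B * ∑ i ∈ range M, y ^ i / i ! + y ^ M / M ! * M₀

theorem hasDerivAt_picardBound (B M₀ : ℝ) (M : ℕ) (y : ℝ) :
    HasDerivAt (picardBound B M₀ (M + 1)) (picardBound B M₀ M y) y :=
  ((hasDerivAt_sum_range_succ_pow_div_factorial M y).const_mul B).add
    ((hasDerivAt_pow_succ_div_factorial M y).mul_const M₀)

theorem continuous_picardBound (B M₀ : ℝ) (M : ℕ) : Continuous (picardBound B M₀ M) := by
  unfold picardBound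
  fun_prop

@[simp]
theorem picardBound_succ_zero (B M₀ : ℝ) (M : ℕ) : picardBound B M₀ (M + 1) 0 = B := by
  simp [picardBound, sum_range_succ']

theorem picardBound_le {B M₀ y z : ℝ} (hB : 0 ≤ B) (hM₀ : 0 ≤ M₀) (hy : 0 ≤ y) (hyz : y ≤ z)
    (M : ℕ) : picardBound B M₀ M y ≤ B * Real.exp z + z ^ M / M ! * M₀ := by
  unfold picardBound
  have hz : 0 ≤ z := hy.trans hyz
  gcongr
  calc ∑ i ∈ range M, y ^ i / i ! ≤ ∑ i ∈ range M, z ^ i / i ! := by gcongr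
    _ ≤ Real.exp z := Real.sum_le_exp_of_nonneg hz M

theorem tsum_inv_two_pow_succ_mul_le {x : ℕ → ℝ} {P : ℝ} (hx0 : ∀ j, 0 ≤ x j)
    (hxP : ∀ j, x j ≤ P) : ∑' j, (2 : ℝ)⁻¹ ^ (j + 1) * x j ≤ P := by
  have hP : HasSum (fun j : ℕ => (2 : ℝ)⁻¹ ^ (j + 1) * P) P := by
    convert hasSum_geometric_two' P using 2 with j
    rw [inv_pow, pow_succ]
    field_simp
  have hS : Summable fun j => (2 : ℝ)⁻¹ ^ (j + 1) * x j :=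
    hP.summable.of_nonneg_of_le (fun j => by have := hx0 j; positivity)
      fun j => by gcongr; exact hxP j
  exact hasSum_le (fun j => by gcongr; exact hxP j) hS.hasSum hP

theorem le_of_forall_le_add_pow_div_factorial_mul {x A z M₀ : ℝ}
    (h : ∀ M : ℕ, 1 ≤ M → x ≤ A + z ^ M / M ! * M₀) : x ≤ A := by
  have hlim : Tendsto (fun M : ℕ => A + z ^ M / M ! * M₀) atTop (𝓝 A) := by
    simpa using
      tendsto_const_nhds.add ((FloorSemiring.tendsto_pow_div_factorial_atTop z).mul_const M₀)
  exact ge_of_tendsto hlim (eventually_atTop.2 ⟨1, h⟩)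

theorem le_picardBound {a b B M₀ : ℝ} {g : ℝ → ℝ} {E : ℕ → ℝ → ℝ}
    (hg0 : ∀ t ∈ Ico a b, 0 ≤ g t) (hgi : IntegrableOn g (Ico a b))
    (hE : ∀ k, ∀ t ∈ Ico a b, 0 ≤ E k t ∧ E k t ≤ M₀)
    (hErec : ∀ k, ∀ t ∈ Ico a b,
      E k t ≤ B + ∫ τ in Ico a t, g τ * ∑' j : ℕ, (2 : ℝ)⁻¹ ^ (j + 1) * E (j + 1) τ)
    (M k : ℕ) {t : ℝ} (ht : t ∈ Ico a b) :
    E k t ≤ picardBound B M₀ M (∫ τ in Ico a t, g τ) := by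
  induction M generalizing k t with
  | zero => simpa [picardBound] using (hE k t ht).2
  | succ M ih =>
    have hIco : ∀ {s} {Φ : ℝ → ℝ}, a ≤ s → ∫ τ in Ico a s, Φ τ = ∫ τ in a..s, Φ τ :=
      fun hs => by rw [integral_Ico_eq_integral_Ioc, intervalIntegral.integral_of_le hs]
    have hsub : Icc a t ⊆ Ico a b := Icc_subset_Ico_right ht.2
    have hgt : IntegrableOn g (uIcc a t) := hgi.mono_set (uIcc_of_le ht.1 ▸ hsub)
    have hPG : ContinuousOn (fun τ => picardBound B M₀ M (∫ s in a..τ, g s)) (Icc a t) :=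
      (continuous_picardBound B M₀ M).comp_continuousOn
        (uIcc_of_le ht.1 ▸ intervalIntegral.continuousOn_primitive_interval hgt)
    have hS : ∀ τ ∈ Ico a t, ∑' j : ℕ, (2 : ℝ)⁻¹ ^ (j + 1) * E (j + 1) τ
        ≤ picardBound B M₀ M (∫ s in a..τ, g s) := fun τ hτ =>
      tsum_inv_two_pow_succ_mul_le (fun j => (hE _ τ (hsub (Ico_subset_Icc_self hτ))).1)
        fun j => hIco hτ.1 ▸ ih (j + 1) (hsub (Ico_subset_Icc_self hτ))
    calc E k t ≤ B + ∫ τ in Ico a t, g τ * ∑' j : ℕ, (2 : ℝ)⁻¹ ^ (j + 1) * E (j + 1) τ :=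
          hErec k t ht
      _ ≤ B + ∫ τ in Ico a t, g τ * picardBound B M₀ M (∫ s in a..τ, g s) := by
          refine add_le_add_right (integral_mono_of_nonneg ?_ ?_ ?_) B
          · filter_upwards [ae_restrict_mem measurableSet_Ico] with τ hτ
            have hτ' := hsub (Ico_subset_Icc_self hτ)
            exact mul_nonneg (hg0 τ hτ')
              (tsum_nonneg fun j => mul_nonneg (by positivity) (hE _ τ hτ').1)
          · exact (hgi.mono_set (Ico_subset_Icc_self.trans hsub)).mul_continuousOn_of_subset hPG
              measurableSet_Ico isCompact_Icc Ico_subset_Icc_self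
          · filter_upwards [ae_restrict_mem measurableSet_Ico] with τ hτ
            exact mul_le_mul_of_nonneg_left (hS τ hτ) (hg0 τ (hsub (Ico_subset_Icc_self hτ)))
      _ = picardBound B M₀ (M + 1) (∫ τ in Ico a t, g τ) := by
          rw [hIco ht.1, hIco ht.1, hgt.intervalIntegrable.integral_mul_comp_primitive
            (hasDerivAt_picardBound B M₀ M) (continuous_picardBound B M₀ M)]
          simp

theorem stmt_8_general (t₀ : ℝ) (C₀ r B M₀ : ℝ)
    (hC₀ : 0 < C₀) (hr : 0 < r) (hB : 0 ≤ B)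
    (f : ℝ → ℝ) (hf0 : ∀ t ∈ Ico t₀ (0 : ℝ), 0 ≤ f t)
    (hfi : IntegrableOn f (Ico t₀ (0 : ℝ)))
    (C₁ : ℝ) (hC₁ : C₁ = C₀ / r * ∫ τ in Ico t₀ (0 : ℝ), f τ)
    (E : ℕ → ℝ → ℝ)
    (hE0 : ∀ k, ∀ t ∈ Ico t₀ (0 : ℝ), 0 ≤ E k t ∧ E k t ≤ M₀)
    (hErec : ∀ k, ∀ t ∈ Ico t₀ (0 : ℝ),
      E k t ≤ B + C₀ / r * ∫ τ in Ico t₀ t,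
        f τ * ∑' j : ℕ, (2 : ℝ)⁻¹ ^ (j + 1) * E (j + 1) τ) :
    (∀ M : ℕ, 1 ≤ M → ∀ t ∈ Ico t₀ (0 : ℝ),
      E 0 t ≤ B * Real.exp C₁ + C₁ ^ M / (Nat.factorial M) * M₀)
    ∧ ∀ t ∈ Ico t₀ (0 : ℝ), E 0 t ≤ B * Real.exp C₁ := by
  set g : ℝ → ℝ := fun τ => C₀ / r * f τ
  have hg0 : ∀ τ ∈ Ico t₀ (0 : ℝ), 0 ≤ g τ := fun τ hτ =>
    mul_nonneg (div_nonneg hC₀.le hr.le) (hf0 τ hτ)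
  have hgi : IntegrableOn g (Ico t₀ (0 : ℝ)) := hfi.const_mul _
  have hrec : ∀ k, ∀ t ∈ Ico t₀ (0 : ℝ), E k t ≤
      B + ∫ τ in Ico t₀ t, g τ * ∑' j : ℕ, (2 : ℝ)⁻¹ ^ (j + 1) * E (j + 1) τ := fun k t ht => by
    simpa only [g, mul_assoc, integral_const_mul] using hErec k t ht
  have hbound : ∀ M : ℕ, ∀ t ∈ Ico t₀ (0 : ℝ), E 0 t ≤ B * Real.exp C₁ + C₁ ^ M / M ! * M₀ := by
    intro M t ht
    have hM₀ : 0 ≤ M₀ := (hE0 0 t ht).1.trans (hE0 0 t ht).2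
    have hGt : 0 ≤ ∫ τ in Ico t₀ t, g τ := setIntegral_nonneg measurableSet_Ico fun τ hτ =>
      hg0 τ (Ico_subset_Ico_right ht.2.le hτ)
    have hGC₁ : ∫ τ in Ico t₀ t, g τ ≤ C₁ := by
      rw [hC₁, ← integral_const_mul]
      refine setIntegral_mono_set hgi ?_ (Eventually.of_forall (Ico_subset_Ico_right ht.2.le))
      filter_upwards [ae_restrict_mem measurableSet_Ico] with τ hτ using hg0 τ hτ
    exact (le_picardBound hg0 hgi hE0 hrec M 0 ht).trans (picardBound_le hB hM₀ hGt hGC₁ M)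
  exact ⟨fun M _ => hbound M, fun t ht =>
    le_of_forall_le_add_pow_div_factorial_mul fun M _ => hbound M t ht⟩

/-- Abstract Grönwall-type iteration lemma: a countable family of uniformly bounded
nonnegative functions satisfying a common integral inequality with geometric weights
`2^{-j}` obeys the exponential bound `E₀(t) ≤ B e^{C₁} + (C₁^M/M!) M₀` for each `M ≥ 1`,
and hence `E₀(t) ≤ B e^{C₁}`. -/
theorem stmt_8 (t₀ : ℝ) (ht₀ : t₀ < 0) (C₀ r B M₀ : ℝ)
    (hC₀ : 0 < C₀) (hr : 0 < r) (hB : 0 ≤ B) (hM₀ : 0 ≤ M₀)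
    (f : ℝ → ℝ) (hfm : Measurable f) (hf0 : ∀ t ∈ Ico t₀ (0 : ℝ), 0 ≤ f t)
    (hfi : IntegrableOn f (Ico t₀ (0 : ℝ)))
    (C₁ : ℝ) (hC₁ : C₁ = C₀ / r * ∫ τ in Ico t₀ (0 : ℝ), f τ)
    (E : ℕ → ℝ → ℝ) (hEm : ∀ k, Measurable (E k))
    (hE0 : ∀ k, ∀ t ∈ Ico t₀ (0 : ℝ), 0 ≤ E k t ∧ E k t ≤ M₀)
    (hErec : ∀ k, ∀ t ∈ Ico t₀ (0 : ℝ),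
      E k t ≤ B + C₀ / r * ∫ τ in Ico t₀ t,
        f τ * ∑' j : ℕ, (2 : ℝ)⁻¹ ^ (j + 1) * E (j + 1) τ) :
    (∀ M : ℕ, 1 ≤ M → ∀ t ∈ Ico t₀ (0 : ℝ),
      E 0 t ≤ B * Real.exp C₁ + C₁ ^ M / (Nat.factorial M) * M₀)
    ∧ ∀ t ∈ Ico t₀ (0 : ℝ), E 0 t ≤ B * Real.exp C₁ :=
  stmt_8_general t₀ C₀ r B M₀ hC₀ hr hB f hf0 hfi C₁ hC₁ E hE0 hErec
end

section
/- Let n ≥ 1 be an integer, let q > 1 be real, and let p ∈ [3,∞] (with the convention 1/p = 0 when p = ∞). Assume 1 − 2/p − 1/q > 0 and n − 2n/p − (2+n)/q > 0, and set β = (q/(q−1))·(n − 2n/p − (2+n)/q). Then n − (2/q)/(1 − 2/p − 1/q) = (n − 2n/p − (2+n)/q)/(1 − 2/p − 1/q) ≥ β, and equality holds if and only if p = ∞. -/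
open scoped ENNReal

/-- Comparison of the refined concentration-dimension bound
`n - (2/q)/(1 - 2/p - 1/q)` with the scaling exponent
`β = (q/(q-1))(n - 2n/p - (2+n)/q)`: the former equals
`(n - 2n/p - (2+n)/q)/(1 - 2/p - 1/q)`, is at least `β`, and equals `β`
if and only if `p = ∞` (convention `1/p = 0` when `p = ∞`). -/
theorem stmt_13 (n : ℕ) (hn : 1 ≤ n) (q : ℝ) (hq : 1 < q) (p : ℝ≥0∞) (hp : 3 ≤ p)
    (h1 : 0 < 1 - 2 * p⁻¹.toReal - 1 / q)
    (h2 : 0 < (n : ℝ) - 2 * n * p⁻¹.toReal - (2 + n) / q) :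
    (n : ℝ) - (2 / q) / (1 - 2 * p⁻¹.toReal - 1 / q)
        = ((n : ℝ) - 2 * n * p⁻¹.toReal - (2 + n) / q) / (1 - 2 * p⁻¹.toReal - 1 / q)
    ∧ q / (q - 1) * ((n : ℝ) - 2 * n * p⁻¹.toReal - (2 + n) / q)
        ≤ ((n : ℝ) - 2 * n * p⁻¹.toReal - (2 + n) / q) / (1 - 2 * p⁻¹.toReal - 1 / q)
    ∧ (((n : ℝ) - 2 * n * p⁻¹.toReal - (2 + n) / q) / (1 - 2 * p⁻¹.toReal - 1 / q)
          = q / (q - 1) * ((n : ℝ) - 2 * n * p⁻¹.toReal - (2 + n) / q)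
        ↔ p = ∞) := by
  set x := p⁻¹.toReal with hxdef
  have hp0 : p ≠ 0 := by
    intro h
    rw [h] at hp
    simp at hp
  have hinv_ne : p⁻¹ ≠ ∞ := by simpa using hp0
  have hx0 : x = 0 ↔ p = ∞ := by
    rw [hxdef, ENNReal.toReal_eq_zero_iff]
    simp [hinv_ne, ENNReal.inv_eq_zero]
  have hxnn : 0 ≤ x := ENNReal.toReal_nonneg
  have hq0 : (0:ℝ) < q := by linarith
  have hq1 : (0:ℝ) < q - 1 := by linarith
  have hD : (0:ℝ) < 1 - 2 * x - 1 / q := h1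
  have hA : (0:ℝ) < (n : ℝ) - 2 * n * x - (2 + n) / q := h2
  have hqne : q ≠ 0 := hq0.ne'
  have key : q * ((n:ℝ) - 2 * n * x - (2 + n) / q) * (1 - 2 * x - 1 / q)
      = ((n:ℝ) - 2 * n * x - (2 + n) / q) * (q - 1)
        - 2 * q * x * ((n:ℝ) - 2 * n * x - (2 + n) / q) := by
    field_simp
    ring
  have hqA : 0 < q * ((n:ℝ) - 2 * n * x - (2 + n) / q) := mul_pos hq0 hA
  refine ⟨?_, ?_, ?_⟩
  · have hrw : ((n:ℝ) - 2 * n * x - (2 + n) / q)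
        = (n:ℝ) * (1 - 2 * x - 1 / q) - 2 / q := by
      field_simp
      ring
    rw [hrw, sub_div, mul_div_assoc, div_self hD.ne', mul_one]
  · rw [div_mul_eq_mul_div, div_le_div_iff₀ hq1 hD]
    nlinarith [mul_nonneg hxnn hqA.le]
  · rw [eq_comm, div_mul_eq_mul_div, div_eq_div_iff hq1.ne' hD.ne']
    constructor
    · intro h
      rw [← hx0]
      have hx2 : x * (2 * (q * ((n:ℝ) - 2 * n * x - (2 + n) / q))) = 0 := by
        nlinarith
      rcases mul_eq_zero.1 hx2 with h' | h'
      · exact h'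
      · nlinarith
    · intro h
      rw [← hx0] at h
      rw [key, h]
      ring
end

section
/- Let n ≥ 1, let Ω ⊂ ℝⁿ be open, let r > 1, and let (f_k)_{k∈ℕ} be nonnegative functions in L¹(ℝⁿ) with sup_k ‖f_k‖_{L^r(Ω)} = M < ∞, such that the measures with densities f_k converge to a finite Borel measure μ in the sense that ∫ σ f_k dx → ∫ σ dμ for every continuous compactly supported σ : ℝⁿ → ℝ. Then μ(S) = 0 for every compact set S ⊂ Ω with Hausdorff dimension dim_H(S) < n. Consequently, the concentration dimension D := inf{ dim_H(S) : S ⊂ Ω compact, μ(S) > 0 } (defined to be n if the collection is empty) equals n. -/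
open MeasureTheory Set Filter
open scoped Classical ENNReal NNReal Topology

/-!
Test the limit against an Urysohn function `σ` that equals `1` on the compact set `S` and is
supported in an open set `U` with `S ⊆ U ⊆ Ω`. Then
`μ S ≤ ∫ σ dμ = lim ∫ σ f_k ≤ sup_k ‖f_k‖_{L¹(U)} ≤ M |U|^(1 - 1/r)` by Hölder's inequality.
A set of Hausdorff dimension `< n` is Lebesgue-null, so by outer regularity `|U|` can be taken
arbitrarily small, and `μ S = 0`. Hence every compact subset of `Ω` of positive `μ`-mass has
dimension exactly `n`.
-/

namespace MeasureTheory

section WeakLimit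

variable {X : Type*} [TopologicalSpace X] [T2Space X] [LocallyCompactSpace X]

theorem measure_le_of_tendsto_integral_mul [MeasurableSpace X] [OpensMeasurableSpace X]
    {μ ν : Measure X} [IsFiniteMeasureOnCompacts μ]
    {g : ℕ → X → ℝ}
    (hconv : ∀ σ : X → ℝ, Continuous σ → HasCompactSupport σ →
      Tendsto (fun k => ∫ x, σ x * g k x ∂ν) atTop (𝓝 (∫ x, σ x ∂μ)))
    {S U : Set X} (hS : IsCompact S) (hU : IsOpen U) (hSU : S ⊆ U) {C : ℝ≥0∞}
    (hC : ∀ k, eLpNorm (g k) 1 (ν.restrict U) ≤ C) : μ S ≤ C := by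
  obtain ⟨σ, hσS, hσU, hσc, hσ01⟩ := exists_continuous_one_zero_of_isCompact hS
    hU.isClosed_compl (disjoint_compl_right_iff_subset.2 hSU)
  have hμS : μ S ≤ ENNReal.ofReal (∫ x, σ x ∂μ) := by
    rw [ofReal_integral_eq_lintegral_ofReal (σ.continuous.integrable_of_hasCompactSupport hσc)
      (ae_of_all _ fun x => (hσ01 x).1), ← lintegral_indicator_one hS.measurableSet]
    refine lintegral_mono fun x => ?_
    by_cases hx : x ∈ S
    · simp [hx, hσS hx]
    · simp [hx]
  have hbound : ∀ k, ENNReal.ofReal (∫ x, σ x * g k x ∂ν) ≤ C := fun k =>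
    calc ENNReal.ofReal (∫ x, σ x * g k x ∂ν)
        ≤ ∫⁻ x, ‖σ x * g k x‖ₑ ∂ν :=
          (Real.ofReal_le_enorm _).trans (enorm_integral_le_lintegral_enorm _)
      _ ≤ ∫⁻ x in U, ‖g k x‖ₑ ∂ν := by
          rw [← lintegral_indicator hU.measurableSet]
          refine lintegral_mono fun x => ?_
          by_cases hx : x ∈ U
          · rw [indicator_of_mem hx, enorm_mul]
            refine mul_le_of_le_one_left zero_le ?_
            rw [Real.enorm_eq_ofReal (hσ01 x).1]
            exact ENNReal.ofReal_le_one.2 (hσ01 x).2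
          · simp [hx, hσU (mem_compl hx)]
      _ = eLpNorm (g k) 1 (ν.restrict U) := eLpNorm_one_eq_lintegral_enorm.symm
      _ ≤ C := hC k
  exact hμS.trans (le_of_tendsto'
    ((ENNReal.continuous_ofReal.tendsto _).comp (hconv σ σ.continuous hσc)) hbound)

theorem measure_eq_zero_of_tendsto_integral_mul_of_eLpNorm_le
    [MeasurableSpace X] [BorelSpace X] {μ ν : Measure X} [IsFiniteMeasureOnCompacts μ]
    [ν.OuterRegular] {g : ℕ → X → ℝ}
    (hconv : ∀ σ : X → ℝ, Continuous σ → HasCompactSupport σ →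
      Tendsto (fun k => ∫ x, σ x * g k x ∂ν) atTop (𝓝 (∫ x, σ x ∂μ)))
    {Ω : Set X} (hΩ : IsOpen Ω) {p M : ℝ≥0∞} (hp : 1 < p) (hM : M ≠ ∞)
    (hg : ∀ k, AEStronglyMeasurable (g k) (ν.restrict Ω))
    (hgM : ∀ k, eLpNorm (g k) p (ν.restrict Ω) ≤ M)
    {S : Set X} (hS : IsCompact S) (hSΩ : S ⊆ Ω) (hνS : ν S = 0) : μ S = 0 := by
  set a : ℝ := 1 - 1 / p.toReal
  have ha : 0 < a := by
    rcases eq_or_ne p ∞ with rfl | hp_top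
    · simp [a]
    · have : 1 < p.toReal := by
        simpa using (ENNReal.toReal_lt_toReal ENNReal.one_ne_top hp_top).2 hp
      simp only [a, sub_pos]
      exact (div_lt_one (by linarith)).2 this
  have hU : ∀ U, IsOpen U → S ⊆ U → U ⊆ Ω → μ S ≤ M * ν U ^ a := by
    intro U hUo hSU hUΩ
    refine measure_le_of_tendsto_integral_mul hconv hS hUo hSU fun k => ?_
    calc eLpNorm (g k) 1 (ν.restrict U)
        ≤ eLpNorm (g k) p (ν.restrict U) * ν.restrict U univ ^ a := by
          simpa [a] using eLpNorm_le_eLpNorm_mul_rpow_measure_univ hp.le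
            ((hg k).mono_measure (Measure.restrict_mono hUΩ le_rfl))
      _ ≤ M * ν U ^ a := by
          rw [Measure.restrict_apply_univ]
          gcongr
          exact (eLpNorm_mono_measure _ (Measure.restrict_mono hUΩ le_rfl)).trans (hgM k)
  have hle : ∀ m : ℕ, μ S ≤ M * ((m : ℝ≥0∞)⁻¹) ^ a := by
    intro m
    obtain ⟨U, hSU, hUo, hUν⟩ := S.exists_isOpen_lt_of_lt (m : ℝ≥0∞)⁻¹
      (hνS ▸ ENNReal.inv_pos.2 (ENNReal.natCast_ne_top m))
    refine (hU (U ∩ Ω) (hUo.inter hΩ) (subset_inter hSU hSΩ) inter_subset_right).trans ?_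
    gcongr
    exact (measure_mono inter_subset_left).trans hUν.le
  have hlim : Tendsto (fun m : ℕ => M * ((m : ℝ≥0∞)⁻¹) ^ a) atTop (𝓝 (M * 0 ^ a)) :=
    ENNReal.Tendsto.const_mul
      ((ENNReal.continuous_rpow_const.tendsto 0).comp ENNReal.tendsto_inv_nat_nhds_zero)
      (Or.inr hM)
  rw [ENNReal.zero_rpow_of_pos ha, mul_zero] at hlim
  exact nonpos_iff_eq_zero.1 (ge_of_tendsto' hlim hle)

end WeakLimit

section FiniteDimensional

variable {E : Type*} [NormedAddCommGroup E] [NormedSpace ℝ E] [FiniteDimensional ℝ E]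

theorem Measure.addHaar_eq_zero_of_dimH_lt_finrank [MeasurableSpace E] [BorelSpace E]
    (μ : Measure E) [μ.IsAddHaarMeasure] {s : Set E}
    (hs : dimH s < Module.finrank ℝ E) : μ s = 0 := by
  let e : E ≃L[ℝ] (Fin (Module.finrank ℝ E) → ℝ) :=
    (Module.finBasis ℝ E).equivFun.toContinuousLinearEquiv
  have hvol : volume (e '' s) = 0 := by
    have hH : (μH[((Module.finrank ℝ E : ℝ≥0) : ℝ)] : Measure (Fin (Module.finrank ℝ E) → ℝ)) =
        volume := by
      simpa using hausdorffMeasure_pi_real (ι := Fin (Module.finrank ℝ E))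
    rw [← hH]
    exact hausdorffMeasure_of_dimH_lt (by simpa [e.dimH_image] using hs)
  have hmap : μ.map e ≪ volume := absolutelyContinuous_isAddHaarMeasure _ _
  exact nonpos_iff_eq_zero.1
    ((le_map_apply_image e.continuous.aemeasurable s).trans_eq (hmap hvol))

theorem dimH_eq_finrank_of_measure_pos [MeasurableSpace E] {μ : Measure E} {Ω : Set E}
    (hμ : ∀ S ⊆ Ω, IsCompact S → dimH S < Module.finrank ℝ E → μ S = 0)
    {S : Set E} (hSΩ : S ⊆ Ω) (hS : IsCompact S) (hμS : 0 < μ S) :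
    dimH S = Module.finrank ℝ E :=
  le_antisymm ((dimH_mono (subset_univ S)).trans_eq (Real.dimH_univ_eq_finrank E))
    (not_lt.1 fun hlt => hμS.ne' (hμ S hSΩ hS hlt))

theorem concentrationDim_eq_finrank [MeasurableSpace E] {μ : Measure E} {Ω : Set E}
    (hμ : ∀ S ⊆ Ω, IsCompact S → dimH S < Module.finrank ℝ E → μ S = 0) :
    (if (∃ S : Set E, S ⊆ Ω ∧ IsCompact S ∧ 0 < μ S)
      then sInf {d : ℝ≥0∞ | ∃ S : Set E, S ⊆ Ω ∧ IsCompact S ∧ 0 < μ S ∧ dimH S = d}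
      else (Module.finrank ℝ E : ℝ≥0∞)) = Module.finrank ℝ E := by
  split_ifs with h
  · obtain ⟨S, hSΩ, hS, hμS⟩ := h
    have hset : {d : ℝ≥0∞ | ∃ S : Set E, S ⊆ Ω ∧ IsCompact S ∧ 0 < μ S ∧ dimH S = d} =
        {(Module.finrank ℝ E : ℝ≥0∞)} := by
      refine subset_antisymm ?_ ?_
      · rintro d ⟨T, hTΩ, hT, hμT, rfl⟩
        exact dimH_eq_finrank_of_measure_pos hμ hTΩ hT hμT
      · rintro d rfl
        exact ⟨S, hSΩ, hS, hμS, dimH_eq_finrank_of_measure_pos hμ hSΩ hS hμS⟩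
    rw [hset, sInf_singleton]
  · rfl

end FiniteDimensional

end MeasureTheory

theorem stmt_19_general (n : ℕ) (Ω : Set (EuclideanSpace ℝ (Fin n)))
    (hΩ : IsOpen Ω) (r : ℝ) (hr : 1 < r) (M : ℝ)
    (f : ℕ → EuclideanSpace ℝ (Fin n) → ℝ)
    (hfi : ∀ k, Integrable (f k))
    (hM : ∀ k, eLpNorm (f k) (ENNReal.ofReal r) (volume.restrict Ω) ≤ ENNReal.ofReal M)
    (μ : Measure (EuclideanSpace ℝ (Fin n))) (hμfin : IsFiniteMeasure μ)
    (hconv : ∀ σ : EuclideanSpace ℝ (Fin n) → ℝ, Continuous σ → HasCompactSupport σ →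
      Tendsto (fun k => ∫ x, σ x * f k x) atTop (nhds (∫ x, σ x ∂μ))) :
    (∀ S : Set (EuclideanSpace ℝ (Fin n)), S ⊆ Ω → IsCompact S →
      dimH S < (n : ℝ≥0∞) → μ S = 0)
    ∧ (if (∃ S : Set (EuclideanSpace ℝ (Fin n)), S ⊆ Ω ∧ IsCompact S ∧ 0 < μ S)
        then sInf {d : ℝ≥0∞ | ∃ S : Set (EuclideanSpace ℝ (Fin n)),
          S ⊆ Ω ∧ IsCompact S ∧ 0 < μ S ∧ dimH S = d}
        else (n : ℝ≥0∞)) = (n : ℝ≥0∞) := by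
  have hnull : ∀ S ⊆ Ω, IsCompact S → dimH S < n → μ S = 0 := fun S hSΩ hS hdim =>
    measure_eq_zero_of_tendsto_integral_mul_of_eLpNorm_le hconv hΩ
      (ENNReal.one_lt_ofReal.2 hr) ENNReal.ofReal_ne_top
      (fun k => (hfi k).aestronglyMeasurable.restrict) hM hS hSΩ
      (Measure.addHaar_eq_zero_of_dimH_lt_finrank volume (by simpa using hdim))
  refine ⟨hnull, ?_⟩
  simpa using concentrationDim_eq_finrank (μ := μ) (Ω := Ω) (by simpa using hnull)

/-- If the measures `f_k dx` converge weak-* to a finite measure `μ` and the `f_k` are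
uniformly bounded in `L^r(Ω)` for some `r > 1`, then `μ` vanishes on compact subsets of
the open set `Ω` of Hausdorff dimension less than `n`, and the concentration dimension
of `μ` in `Ω` equals `n`. -/
theorem stmt_19 (n : ℕ) (hn : 1 ≤ n) (Ω : Set (EuclideanSpace ℝ (Fin n)))
    (hΩ : IsOpen Ω) (r : ℝ) (hr : 1 < r) (M : ℝ)
    (f : ℕ → EuclideanSpace ℝ (Fin n) → ℝ)
    (hf0 : ∀ k x, 0 ≤ f k x) (hfi : ∀ k, Integrable (f k))
    (hM : ∀ k, eLpNorm (f k) (ENNReal.ofReal r) (volume.restrict Ω) ≤ ENNReal.ofReal M)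
    (μ : Measure (EuclideanSpace ℝ (Fin n))) (hμfin : IsFiniteMeasure μ)
    (hconv : ∀ σ : EuclideanSpace ℝ (Fin n) → ℝ, Continuous σ → HasCompactSupport σ →
      Tendsto (fun k => ∫ x, σ x * f k x) atTop (nhds (∫ x, σ x ∂μ))) :
    (∀ S : Set (EuclideanSpace ℝ (Fin n)), S ⊆ Ω → IsCompact S →
      dimH S < (n : ℝ≥0∞) → μ S = 0)
    ∧ (if (∃ S : Set (EuclideanSpace ℝ (Fin n)), S ⊆ Ω ∧ IsCompact S ∧ 0 < μ S)
        then sInf {d : ℝ≥0∞ | ∃ S : Set (EuclideanSpace ℝ (Fin n)),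
          S ⊆ Ω ∧ IsCompact S ∧ 0 < μ S ∧ dimH S = d}
        else (n : ℝ≥0∞)) = (n : ℝ≥0∞) :=
  stmt_19_general n Ω hΩ r hr M f hfi hM μ hμfin hconv
end
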